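/- arXiv:math/0005011 — 4 statements merged into one kernel-verified Lean document; each statement's English description precedes it below -/
import Mathlib

section
/- Let f : ℝ → ℝ be a nonnegative locally integrable function such that ∫₀^∞ f = ∞ and ∫_{-∞}^0 f = ∞. Then there exists a sequence of compactly supported, absolutely continuous (locally Lipschitz) functions χₙ : ℝ → ℝ such that 0 ≤ χₙ ≤ 1, |χₙ'(x)| ≤ (1/n) f(x) for a.e. x, and χₙ(x) → 1 pointwise as n → ∞. -/
open MeasureTheory Filter Set

open scoped Topology ENNReal Interval

noncomputable def phi0 (t : ℝ) : ℝ := min 1 (max 0 (2 - |t|))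

lemma phi0_nonneg (t : ℝ) : 0 ≤ phi0 t := le_min one_pos.le (le_max_left _ _)

lemma phi0_le_one (t : ℝ) : phi0 t ≤ 1 := min_le_left _ _

lemma phi0_eq_one {t : ℝ} (h : |t| ≤ 1) : phi0 t = 1 := by
  have : (1:ℝ) ≤ 2 - |t| := by linarith
  simp only [phi0]
  rw [max_eq_right (by linarith : (0:ℝ) ≤ 2 - |t|), min_eq_left this]

lemma phi0_eq_zero {t : ℝ} (h : 2 ≤ |t|) : phi0 t = 0 := by
  simp only [phi0]
  rw [max_eq_left (by linarith : 2 - |t| ≤ 0), min_eq_right one_pos.le]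

lemma phi0_lipschitz : LipschitzWith 1 phi0 := by
  have h1 : LipschitzWith 1 (fun t : ℝ => (2 : ℝ) - |t|) := by
    apply LipschitzWith.of_dist_le_mul
    intro a b
    rw [Real.dist_eq, Real.dist_eq]
    have := abs_abs_sub_abs_le_abs_sub a b
    rw [NNReal.coe_one, one_mul]
    calc |2 - |a| - (2 - |b|)| = |(|b| - |a|)| := by ring_nf
    _ ≤ |b - a| := abs_abs_sub_abs_le_abs_sub b a
    _ = |a - b| := abs_sub_comm b a
  have h2 : LipschitzWith 1 (fun x : ℝ => min 1 (max 0 x)) := by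
    have := (LipschitzWith.id (α := ℝ)).const_min 1
    exact (((LipschitzWith.id (α := ℝ)).const_max 0).const_min 1)
  have h3 : LipschitzWith (1 * 1) phi0 := h2.comp h1
  rwa [mul_one] at h3

lemma intInt_of_bdd {g : ℝ → ℝ} (hg : Measurable g) {M : ℝ} (h0 : ∀ x, 0 ≤ g x)
    (hM : ∀ x, g x ≤ M) (a b : ℝ) : IntervalIntegrable g volume a b := by
  have key : ∀ a b : ℝ, IntegrableOn g (Ioc a b) := by
    intro a b
    apply Measure.integrableOn_of_bounded (M := M)
    · simp [Real.volume_Ioc]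
    · exact hg.aestronglyMeasurable
    · exact Filter.Eventually.of_forall fun x => by
        rw [Real.norm_eq_abs, abs_of_nonneg (h0 x)]; exact hM x
  exact ⟨key a b, key b a⟩

lemma mono_primitive {g : ℝ → ℝ} (hint : ∀ a b : ℝ, IntervalIntegrable g volume a b)
    (h0 : ∀ x, 0 ≤ g x) : Monotone (fun y => ∫ t in (0:ℝ)..y, g t) := by
  intro x y hxy
  have h := intervalIntegral.integral_add_adjacent_intervals (hint 0 x) (hint x y)
  have h2 : 0 ≤ ∫ t in x..y, g t :=
    intervalIntegral.integral_nonneg hxy (fun u _ => h0 u)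
  simp only [] at h ⊢
  linarith

lemma lip_primitive {g : ℝ → ℝ} (hint : ∀ a b : ℝ, IntervalIntegrable g volume a b)
    {M : ℝ} (hM0 : 0 ≤ M) (hM : ∀ x, |g x| ≤ M) :
    LipschitzWith M.toNNReal (fun y => ∫ t in (0:ℝ)..y, g t) := by
  apply LipschitzWith.of_dist_le_mul
  intro x y
  have h := intervalIntegral.integral_add_adjacent_intervals (hint 0 y) (hint y x)
  rw [Real.dist_eq, Real.dist_eq]
  have hb : |∫ t in y..x, g t| ≤ M * |x - y| := by
    have := intervalIntegral.norm_integral_le_of_norm_le_const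
      (a := y) (b := x) (C := M) (f := g) (fun u _ => hM u)
    simpa [Real.norm_eq_abs] using this
  have : (∫ t in (0:ℝ)..x, g t) - (∫ t in (0:ℝ)..y, g t) = ∫ t in y..x, g t := by
    linarith
  rw [this]
  rw [Real.coe_toNNReal M hM0]
  exact hb

lemma ae_hasDerivAt_primitive {g : ℝ → ℝ} (hg : Measurable g) {M : ℝ}
    (h0 : ∀ x, 0 ≤ g x) (hM : ∀ x, g x ≤ M) :
    ∀ᵐ x, HasDerivAt (fun y => ∫ t in (0:ℝ)..y, g t) (g x) x := by
  have hM0 : (0:ℝ) ≤ M := le_trans (h0 0) (hM 0)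
  have hint : ∀ a b : ℝ, IntervalIntegrable g volume a b := intInt_of_bdd hg h0 hM
  set H : ℝ → ℝ := fun y => ∫ t in (0:ℝ)..y, g t with hH
  have hmono : Monotone H := mono_primitive hint h0
  have hcont : Continuous H :=
    (lip_primitive hint hM0 (fun x => by rw [abs_of_nonneg (h0 x)]; exact hM x)).continuous
  set S : StieltjesFunction ℝ := ⟨H, hmono, fun x => hcont.continuousAt.continuousWithinAt⟩ with hS
  have hmeas : S.measure = volume.withDensity (fun x => ENNReal.ofReal (g x)) := by
    refine Measure.ext_of_Ioc' _ _ (fun a b _ => ?_) (fun a b hab => ?_)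
    · rw [S.measure_Ioc]; exact ENNReal.ofReal_ne_top
    · rw [S.measure_Ioc, withDensity_apply _ measurableSet_Ioc,
        ← ofReal_integral_eq_lintegral_ofReal (hint a b).1
          (Filter.Eventually.of_forall fun x => h0 x)]
      congr 1
      have h := intervalIntegral.integral_add_adjacent_intervals (hint 0 a) (hint a b)
      have h2 : (∫ t in a..b, g t) = ∫ t in Ioc a b, g t :=
        intervalIntegral.integral_of_le hab.le
      show H b - H a = _
      rw [← h2]
      simp only [hH] at h ⊢
      linarith
  have hrn : (fun x => Measure.rnDeriv S.measure volume x)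
      =ᵐ[volume] (fun x => ENNReal.ofReal (g x)) := by
    rw [hmeas]
    exact Measure.rnDeriv_withDensity volume (hg.ennreal_ofReal)
  filter_upwards [S.ae_hasDerivAt, hrn] with x hx hrx
  rw [hrx, ENNReal.toReal_ofReal (h0 x)] at hx
  exact hx

lemma exists_big_pos {g : ℝ → ℝ} (h0 : ∀ x, 0 ≤ g x)
    (hloc : ∀ a b : ℝ, IntegrableOn g (Ioc a b))
    (hdiv : ¬ IntegrableOn g (Ioi (0:ℝ))) (c : ℝ) :
    ∃ R, 0 < R ∧ c ≤ ∫ x in Ioc (0:ℝ) R, g x := by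
  by_contra h
  push_neg at h
  apply hdiv
  apply MeasureTheory.integrableOn_Ioi_of_intervalIntegral_norm_bounded c 0
    (b := fun n : ℕ => (n:ℝ)+1) (l := atTop) (fun i => hloc 0 _)
    (tendsto_atTop_add_const_right atTop 1 tendsto_natCast_atTop_atTop)
  apply Filter.Eventually.of_forall
  intro i
  have hpos : (0:ℝ) < (i:ℝ) + 1 := by positivity
  have := (h ((i:ℝ)+1) hpos).le
  rw [intervalIntegral.integral_of_le hpos.le]
  calc (∫ x in Ioc (0:ℝ) ((i:ℝ)+1), ‖g x‖) = ∫ x in Ioc (0:ℝ) ((i:ℝ)+1), g x := by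
        apply setIntegral_congr_fun measurableSet_Ioc
        intro x _
        show ‖g x‖ = g x
        rw [Real.norm_eq_abs, abs_of_nonneg (h0 x)]
  _ ≤ c := this

lemma exists_big_neg {g : ℝ → ℝ} (h0 : ∀ x, 0 ≤ g x)
    (hloc : ∀ a b : ℝ, IntegrableOn g (Ioc a b))
    (hdiv : ¬ IntegrableOn g (Iio (0:ℝ))) (c : ℝ) :
    ∃ L, L < 0 ∧ c ≤ ∫ x in Ioc L (0:ℝ), g x := by
  by_contra h
  push_neg at h
  apply hdiv
  have : IntegrableOn g (Iic (0:ℝ)) := by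
    apply MeasureTheory.integrableOn_Iic_of_intervalIntegral_norm_bounded c 0
      (a := fun n : ℕ => -((n:ℝ)+1)) (l := atTop) (fun i => hloc _ 0)
      (tendsto_neg_atBot_iff.mpr (tendsto_atTop_add_const_right atTop 1
        tendsto_natCast_atTop_atTop))
    apply Filter.Eventually.of_forall
    intro i
    have hneg : (-((i:ℝ)+1)) < 0 := by
      have h1 : (0:ℝ) < (i:ℝ)+1 := by positivity
      linarith
    have := (h (-((i:ℝ)+1)) hneg).le
    rw [intervalIntegral.integral_of_le hneg.le]
    calc (∫ x in Ioc (-((i:ℝ)+1)) (0:ℝ), ‖g x‖)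
        = ∫ x in Ioc (-((i:ℝ)+1)) (0:ℝ), g x := by
          apply setIntegral_congr_fun measurableSet_Ioc
          intro x _
          show ‖g x‖ = g x
          rw [Real.norm_eq_abs, abs_of_nonneg (h0 x)]
    _ ≤ c := this
  exact this.mono_set Iio_subset_Iic_self

lemma exists_trunc {g : ℝ → ℝ} (hg : Measurable g) (h0 : ∀ x, 0 ≤ g x)
    {s : Set ℝ} (hint : IntegrableOn g s) {c : ℝ}
    (hc : c + 1 ≤ ∫ x in s, g x) : ∃ k : ℕ, c ≤ ∫ x in s, min (g x) k := by
  have hfk : ∀ k : ℕ, Integrable (fun x => min (g x) (k:ℝ)) (volume.restrict s) := by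
    intro k
    apply hint.mono' (hg.min measurable_const).aestronglyMeasurable
    apply Filter.Eventually.of_forall
    intro x
    rw [Real.norm_eq_abs, abs_of_nonneg (le_min (h0 x) (Nat.cast_nonneg k))]
    exact min_le_left _ _
  have T : Tendsto (fun k : ℕ => ∫ x in s, min (g x) (k:ℝ)) atTop (𝓝 (∫ x in s, g x)) := by
    apply integral_tendsto_of_tendsto_of_monotone hfk hint
    · exact Filter.Eventually.of_forall fun x a b hab =>
        min_le_min le_rfl (Nat.cast_le.2 hab)
    · apply Filter.Eventually.of_forall
      intro x
      apply Tendsto.congr' _ tendsto_const_nhds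
      filter_upwards [eventually_ge_atTop ⌈g x⌉₊] with k hk
      exact (min_eq_left ((Nat.le_ceil _).trans (Nat.cast_le.2 hk))).symm
  exact (T.eventually (eventually_ge_nhds (lt_of_lt_of_le (lt_add_one c) hc))).exists

/-- If `f : ℝ → ℝ` is a nonnegative locally integrable function whose
integrals toward `+∞` and `-∞` both diverge, then there is a sequence of compactly
supported, locally Lipschitz (hence absolutely continuous) functions `χ n` with
`0 ≤ χ n ≤ 1`, `|(χ n)' x| ≤ f x / n` almost everywhere, and `χ n → 1` pointwise. -/
theorem statement0 (f : ℝ → ℝ) (hf_loc : LocallyIntegrable f)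
    (hf_nonneg : ∀ x, 0 ≤ f x)
    (hdiv_pos : ¬ IntegrableOn f (Ioi (0 : ℝ)))
    (hdiv_neg : ¬ IntegrableOn f (Iio (0 : ℝ))) :
    ∃ χ : ℕ → ℝ → ℝ,
      (∀ n, HasCompactSupport (χ n)) ∧
      (∀ n, LocallyLipschitz (χ n)) ∧
      (∀ n x, 0 ≤ χ n x ∧ χ n x ≤ 1) ∧
      (∀ n : ℕ, 1 ≤ n → ∀ᵐ x, |deriv (χ n) x| ≤ (n : ℝ)⁻¹ * f x) ∧
      (∀ x, Tendsto (fun n => χ n x) atTop (nhds 1)) := by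
  classical
  have hfm : AEMeasurable f volume := hf_loc.aestronglyMeasurable.aemeasurable
  set g : ℝ → ℝ := fun x => max (hfm.mk f x) 0 with hgdef
  have hgmeas : Measurable g := hfm.measurable_mk.max measurable_const
  have hg0 : ∀ x, 0 ≤ g x := fun x => le_max_right _ _
  have hgf : g =ᵐ[volume] f := by
    filter_upwards [hfm.ae_eq_mk] with x hx
    show max (hfm.mk f x) 0 = f x
    rw [← hx, max_eq_left (hf_nonneg x)]
  have hloc : ∀ a b : ℝ, IntegrableOn g (Ioc a b) := fun a b =>
    ((hf_loc.integrableOn_isCompact isCompact_Icc).mono_set Ioc_subset_Icc_self).congr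
      (ae_restrict_of_ae hgf.symm)
  have hdivg_pos : ¬ IntegrableOn g (Ioi (0:ℝ)) := fun h =>
    hdiv_pos (h.congr (ae_restrict_of_ae hgf))
  have hdivg_neg : ¬ IntegrableOn g (Iio (0:ℝ)) := fun h =>
    hdiv_neg (h.congr (ae_restrict_of_ae hgf))
  have int_min : ∀ (c : ℝ), 0 ≤ c → ∀ (a b : ℝ),
      Integrable (fun x => min (g x) c) (volume.restrict (Ioc a b)) := by
    intro c hc a b
    apply (hloc a b).mono' (hgmeas.min measurable_const).aestronglyMeasurable
    apply Filter.Eventually.of_forall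
    intro x
    rw [Real.norm_eq_abs, abs_of_nonneg (le_min (hg0 x) hc)]
    exact min_le_left _ _
  have key : ∀ m : ℕ, ∃ (M R L : ℝ), 0 ≤ M ∧ 0 < R ∧ L < 0 ∧
      (2*(m:ℝ)+2 ≤ ∫ x in Ioc (0:ℝ) R, min (g x) M) ∧
      (2*(m:ℝ)+2 ≤ ∫ x in Ioc L (0:ℝ), min (g x) M) := by
    intro m
    obtain ⟨R, hRpos, hRint⟩ := exists_big_pos hg0 hloc hdivg_pos (2*(m:ℝ)+3)
    obtain ⟨L, hLneg, hLint⟩ := exists_big_neg hg0 hloc hdivg_neg (2*(m:ℝ)+3)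
    obtain ⟨k₁, hk₁⟩ := exists_trunc hgmeas hg0 (hloc 0 R) (c := 2*(m:ℝ)+2) (by linarith)
    obtain ⟨k₂, hk₂⟩ := exists_trunc hgmeas hg0 (hloc L 0) (c := 2*(m:ℝ)+2) (by linarith)
    refine ⟨((max k₁ k₂ : ℕ) : ℝ), R, L, Nat.cast_nonneg _, hRpos, hLneg, ?_, ?_⟩
    · calc 2*(m:ℝ)+2 ≤ ∫ x in Ioc (0:ℝ) R, min (g x) k₁ := hk₁
        _ ≤ ∫ x in Ioc (0:ℝ) R, min (g x) ((max k₁ k₂ : ℕ) : ℝ) := by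
            apply integral_mono (int_min _ (Nat.cast_nonneg _) _ _) (int_min _ (Nat.cast_nonneg _) _ _)
            intro x
            exact min_le_min le_rfl (Nat.cast_le.2 (le_max_left _ _))
    · calc 2*(m:ℝ)+2 ≤ ∫ x in Ioc L (0:ℝ), min (g x) k₂ := hk₂
        _ ≤ ∫ x in Ioc L (0:ℝ), min (g x) ((max k₁ k₂ : ℕ) : ℝ) := by
            apply integral_mono (int_min _ (Nat.cast_nonneg _) _ _) (int_min _ (Nat.cast_nonneg _) _ _)
            intro x
            exact min_le_min le_rfl (Nat.cast_le.2 (le_max_right _ _))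
  choose M R L hM hRpos hLneg hRint hLint using key
  set gm : ℕ → ℝ → ℝ := fun n x => min (g x) (M n) with hgm
  set H : ℕ → ℝ → ℝ := fun n y => ∫ t in (0:ℝ)..y, gm n t with hHdef
  set χ : ℕ → ℝ → ℝ := fun n x => phi0 (H n x / ((n:ℝ)+1)) with hχdef
  have hgm_meas : ∀ n, Measurable (gm n) := fun n => hgmeas.min measurable_const
  have hgm0 : ∀ n x, 0 ≤ gm n x := fun n x => le_min (hg0 x) (hM n)
  have hgmM : ∀ n x, gm n x ≤ M n := fun n x => min_le_right _ _
  have hgm_le : ∀ n x, gm n x ≤ g x := fun n x => min_le_left _ _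
  have hintm : ∀ n a b, IntervalIntegrable (gm n) volume a b := fun n =>
    intInt_of_bdd (hgm_meas n) (hgm0 n) (hgmM n)
  have hmono : ∀ n, Monotone (H n) := fun n => mono_primitive (hintm n) (hgm0 n)
  have hlip : ∀ n, LipschitzWith (M n).toNNReal (H n) := fun n =>
    lip_primitive (hintm n) (hM n)
      (fun x => by rw [abs_of_nonneg (hgm0 n x)]; exact hgmM n x)
  have hderiv : ∀ n, ∀ᵐ x, HasDerivAt (H n) (gm n x) x := fun n =>
    ae_hasDerivAt_primitive (hgm_meas n) (hgm0 n) (hgmM n)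
  have hcpos : ∀ n : ℕ, (0:ℝ) < (n:ℝ)+1 := fun n => by positivity
  -- key values of H at R n and L n
  have hHR : ∀ n : ℕ, 2*(n:ℝ)+2 ≤ H n (R n) := by
    intro n
    have := hRint n
    rwa [← intervalIntegral.integral_of_le (hRpos n).le] at this
  have hHL : ∀ n : ℕ, H n (L n) ≤ -(2*(n:ℝ)+2) := by
    intro n
    have h1 := hLint n
    rw [← intervalIntegral.integral_of_le (hLneg n).le] at h1
    have h2 : H n (L n) = -∫ t in (L n)..(0:ℝ), gm n t := by
      show (∫ t in (0:ℝ)..(L n), gm n t) = _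
      rw [intervalIntegral.integral_symm]
    rw [h2]
    linarith
  refine ⟨χ, ?_, ?_, ?_, ?_, ?_⟩
  · -- compact support
    intro n
    apply HasCompactSupport.intro (isCompact_Icc (a := L n) (b := R n))
    intro x hx
    simp only [mem_Icc, not_and_or, not_le] at hx
    show phi0 (H n x / ((n:ℝ)+1)) = 0
    apply phi0_eq_zero
    rcases hx with hx | hx
    · have h1 : H n x ≤ H n (L n) := hmono n hx.le
      have h2 : H n x / ((n:ℝ)+1) ≤ -2 := by
        rw [div_le_iff₀ (hcpos n)]
        have := hHL n
        linarith
      rw [abs_of_nonpos (by linarith : H n x / ((n:ℝ)+1) ≤ 0)]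
      linarith
    · have h1 : H n (R n) ≤ H n x := hmono n hx.le
      have h2 : (2:ℝ) ≤ H n x / ((n:ℝ)+1) := by
        rw [le_div_iff₀ (hcpos n)]
        have := hHR n
        linarith
      rw [abs_of_nonneg (by linarith : (0:ℝ) ≤ H n x / ((n:ℝ)+1))]
      exact h2
  · -- locally Lipschitz
    intro n
    apply LipschitzWith.locallyLipschitz (K := (M n).toNNReal)
    apply LipschitzWith.of_dist_le_mul
    intro x y
    have h1 : dist (χ n x) (χ n y) ≤ dist (H n x / ((n:ℝ)+1)) (H n y / ((n:ℝ)+1)) := by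
      have := phi0_lipschitz.dist_le_mul (H n x / ((n:ℝ)+1)) (H n y / ((n:ℝ)+1))
      simpa using this
    have h2 : dist (H n x / ((n:ℝ)+1)) (H n y / ((n:ℝ)+1)) ≤ dist (H n x) (H n y) := by
      rw [Real.dist_eq, Real.dist_eq, div_sub_div_same, abs_div,
        abs_of_pos (hcpos n)]
      apply div_le_self (abs_nonneg _)
      have : (1:ℝ) ≤ (n:ℝ)+1 := by
        have : (0:ℝ) ≤ (n:ℝ) := Nat.cast_nonneg n
        linarith
      exact this
    calc dist (χ n x) (χ n y) ≤ dist (H n x) (H n y) := le_trans h1 h2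
      _ ≤ (M n).toNNReal * dist x y := (hlip n).dist_le_mul x y
  · -- bounds
    intro n x
    exact ⟨phi0_nonneg _, phi0_le_one _⟩
  · -- derivative bound
    intro n hn
    filter_upwards [hderiv n, hgf] with x hx hfx
    by_cases hd : DifferentiableAt ℝ (χ n) x
    · have hT1 : Tendsto (fun y => |slope (χ n) x y|) (𝓝[≠] x) (𝓝 |deriv (χ n) x|) :=
        (hasDerivAt_iff_tendsto_slope.1 hd.hasDerivAt).abs
      have hT2 : Tendsto (fun y => |slope (H n) x y| / ((n:ℝ)+1)) (𝓝[≠] x)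
          (𝓝 (|gm n x| / ((n:ℝ)+1))) :=
        ((hasDerivAt_iff_tendsto_slope.1 hx).abs).div_const _
      have hle : |deriv (χ n) x| ≤ |gm n x| / ((n:ℝ)+1) := by
        apply le_of_tendsto_of_tendsto hT1 hT2
        filter_upwards [self_mem_nhdsWithin] with y hy
        have hyx : y - x ≠ 0 := sub_ne_zero.2 hy
        have hnum : |χ n y - χ n x| ≤ |H n y - H n x| / ((n:ℝ)+1) := by
          have := phi0_lipschitz.dist_le_mul (H n y / ((n:ℝ)+1)) (H n x / ((n:ℝ)+1))
          rw [NNReal.coe_one, one_mul, Real.dist_eq, Real.dist_eq, div_sub_div_same,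
            abs_div, abs_of_pos (hcpos n)] at this
          exact this
        show |slope (χ n) x y| ≤ |slope (H n) x y| / ((n:ℝ)+1)
        rw [slope_def_field, slope_def_field, abs_div, abs_div, div_div,
          mul_comm (|y - x|) ((n:ℝ)+1), ← div_div]
        gcongr
      have h2 : |gm n x| / ((n:ℝ)+1) ≤ (n:ℝ)⁻¹ * f x := by
        rw [abs_of_nonneg (hgm0 n x), ← hfx]
        have hn1 : (1:ℝ) ≤ (n:ℝ) := by exact_mod_cast hn
        calc gm n x / ((n:ℝ)+1) ≤ g x / ((n:ℝ)+1) := by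
              gcongr
              exact hgm_le n x
          _ ≤ g x / (n:ℝ) := by
              apply div_le_div_of_nonneg_left (hg0 x) (by linarith) (by linarith)
          _ = (n:ℝ)⁻¹ * g x := by rw [div_eq_inv_mul]
      exact hle.trans h2
    · rw [deriv_zero_of_not_differentiableAt hd, abs_zero]
      exact mul_nonneg (inv_nonneg.2 (Nat.cast_nonneg n)) (hf_nonneg x)
  · -- pointwise convergence
    intro x
    have hCb : ∀ n, |H n x| ≤ ∫ t in Ι (0:ℝ) x, g t := by
      intro n
      calc |H n x| = ‖∫ t in (0:ℝ)..x, gm n t‖ := (Real.norm_eq_abs _).symm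
        _ ≤ ∫ t in Ι (0:ℝ) x, ‖gm n t‖ :=
            intervalIntegral.norm_integral_le_integral_norm_uIoc
        _ ≤ ∫ t in Ι (0:ℝ) x, g t := by
            apply integral_mono (int_min (M n) (hM n) _ _).norm (hloc _ _)
            intro t
            show ‖gm n t‖ ≤ g t
            rw [Real.norm_eq_abs, abs_of_nonneg (hgm0 n t)]
            exact hgm_le n t
    set C := ∫ t in Ι (0:ℝ) x, g t with hC
    have hev : ∀ᶠ n in atTop, χ n x = 1 := by
      filter_upwards [eventually_ge_atTop ⌈C⌉₊] with n hn
      show phi0 (H n x / ((n:ℝ)+1)) = 1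
      apply phi0_eq_one
      rw [abs_div, abs_of_pos (hcpos n), div_le_one (hcpos n)]
      calc |H n x| ≤ C := hCb n
        _ ≤ (⌈C⌉₊ : ℝ) := Nat.le_ceil C
        _ ≤ (n:ℝ) := Nat.cast_le.2 hn
        _ ≤ (n:ℝ)+1 := by linarith
    exact Tendsto.congr' (hev.mono fun n h => h.symm) tendsto_const_nhds
end

section
/- Consider on ℝ the 2×2 system J f' + B f = ℋ g with J = [[0,1],[-1,0]], B = 0, ℋ(x) = [[1,0],[0,0]]. If f = (f₁,f₂) is absolutely continuous with compact support, g is locally ℋ-square-integrable with compact support, and J f' = ℋ g, then f₁ ≡ 0; consequently ℋ f ≡ 0 and the domain of the induced minimal relation S_min in L²_ℋ(ℝ) is {0}. -/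
open MeasureTheory Set Matrix

noncomputable section

/-- `f` is absolutely continuous on `ℝ` with (a.e.) derivative `f'`, expressed via the
fundamental theorem of calculus. -/
def IsACDeriv {E : Type*} [NormedAddCommGroup E] [NormedSpace ℝ E]
    (f f' : ℝ → E) : Prop :=
  LocallyIntegrable f' ∧ ∀ a b : ℝ, f b = f a + ∫ t in a..b, f' t

/-- For the `2×2` system on `ℝ` with `J = [[0,1],[-1,0]]`, `B = 0`,
`ℋ = [[1,0],[0,0]]`: if `f` is absolutely continuous with compact support, `g` is
locally `ℋ`-square-integrable with compact support, and `J f' = ℋ g` a.e., then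
`f₁ ≡ 0`, hence `ℋ f ≡ 0`; i.e. the domain of the induced minimal relation in
`L²_ℋ(ℝ)` is `{0}`. -/
theorem statement2
    (f f' g : ℝ → Fin 2 → ℂ)
    (J : Matrix (Fin 2) (Fin 2) ℂ) (hJ : J = !![0, 1; -1, 0])
    (H : Matrix (Fin 2) (Fin 2) ℂ) (hH : H = !![1, 0; 0, 0])
    (hf_ac : IsACDeriv f f')
    (hf_supp : HasCompactSupport f)
    (hg_supp : HasCompactSupport g)
    (hg_l2loc : LocallyIntegrable (fun x => (star (g x) ⬝ᵥ (H *ᵥ g x)).re))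
    (heq : ∀ᵐ x, J *ᵥ f' x = H *ᵥ g x) :
    (∀ x, f x 0 = 0) ∧ (∀ x, H *ᵥ f x = 0) := by
  obtain ⟨hloc, hftc⟩ := hf_ac
  -- a.e., the first component of f' vanishes
  have h0 : ∀ᵐ x, f' x 0 = 0 := by
    filter_upwards [heq] with x hx
    have h1 := congrFun hx 1
    subst hJ hH
    simp [Matrix.mulVec, dotProduct, Fin.sum_univ_two] at h1
    simpa using h1
  -- f' is interval integrable
  have hII : ∀ a b : ℝ, IntervalIntegrable f' volume a b := by
    intro a b
    constructor <;>
      exact (hloc.integrableOn_isCompact isCompact_Icc).mono_set Ioc_subset_Icc_self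
  -- f 0 is constant
  have hconst : ∀ a b : ℝ, f b 0 = f a 0 := by
    intro a b
    have h := congrFun (hftc a b) 0
    have hproj : (∫ t in a..b, f' t) 0 = ∫ t in a..b, f' t 0 := by
      have := (ContinuousLinearMap.proj (R := ℂ) (φ := fun _ : Fin 2 => ℂ)
        0).intervalIntegral_comp_comm (hII a b)
      simpa using this.symm
    have hz : (∫ t in a..b, f' t 0) = 0 := by
      have h2 : (∫ t in a..b, f' t 0) = ∫ t in a..b, (0 : ℂ) :=
        intervalIntegral.integral_congr_ae (by filter_upwards [h0] with x hx _ using hx)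
      simp [h2]
    rw [h, Pi.add_apply, hproj, hz, add_zero]
  -- pick a point outside the support
  obtain ⟨a, ha⟩ : ∃ a, a ∉ tsupport f := by
    by_contra hcon
    push_neg at hcon
    have : tsupport f = univ := eq_univ_of_forall hcon
    exact (hf_supp.ne_univ) this
  have hfa : f a = 0 := image_eq_zero_of_notMem_tsupport ha
  have key : ∀ x, f x 0 = 0 := fun x => by rw [hconst a x, hfa]; rfl
  refine ⟨key, fun x => ?_⟩
  subst hH
  funext i
  fin_cases i <;>
    simp [Matrix.mulVec, dotProduct, Fin.sum_univ_two, key x]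

end
end

section
/- Let S be a symmetric linear relation in a Hilbert space H. If the relation S² = {(f,h) : ∃ g, (f,g) ∈ S and (g,h) ∈ S} is essentially self-adjoint (its closure equals its adjoint), then S itself is essentially self-adjoint. -/
open scoped InnerProductSpace

noncomputable section

variable {H : Type*} [NormedAddCommGroup H] [InnerProductSpace ℂ H] [CompleteSpace H]

/-- The adjoint relation `S* = {(f,g) : ⟪f,v⟫ = ⟪g,u⟫ for all (u,v) ∈ S}`. -/
def adjRel (S : Set (H × H)) : Set (H × H) :=
  {p | ∀ q ∈ S, ⟪p.1, q.2⟫_ℂ = ⟪p.2, q.1⟫_ℂ}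

/-- The square of a linear relation: `S² = {(f,h) : ∃ g, (f,g) ∈ S ∧ (g,h) ∈ S}`. -/
def sqRel (S : Set (H × H)) : Set (H × H) :=
  {p | ∃ g, (p.1, g) ∈ S ∧ (g, p.2) ∈ S}

/-- A relation is essentially self-adjoint if its closure equals its adjoint. -/
def EssSelfAdjointRel (S : Set (H × H)) : Prop :=
  closure S = adjRel S

/-!
If `S*` were strictly larger than the closure of `S`, it would contain a nonzero `(f, g)`
orthogonal to `S` in `H ⊕ H`; orthogonality says exactly that `(g, -f) ∈ S*` as well.
Composing, `(f, -f) ∈ (S²)*`, which by hypothesis is the closure of `S²`. For symmetric `S`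
every `(u, w) ∈ S²` through `m` has `⟪u, w⟫ = ‖m‖² ≥ 0`, so `-‖f‖² = ⟪f, -f⟫ ≥ 0` and `f = 0`;
the same argument applied to `(g, -f)` gives `g = 0`.
-/

section

omit [CompleteSpace H]

lemma isClosed_adjRel (S : Set (H × H)) : IsClosed (adjRel S) := by
  have h : adjRel S = ⋂ q ∈ S, {p : H × H | ⟪p.1, q.2⟫_ℂ = ⟪p.2, q.1⟫_ℂ} := by
    ext p; simp [adjRel]
  rw [h]
  exact isClosed_biInter fun q _ => isClosed_eq
    (continuous_fst.inner continuous_const) (continuous_snd.inner continuous_const)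

lemma neg_mem_adjRel {S : Set (H × H)} {p : H × H} (hp : p ∈ adjRel S) : -p ∈ adjRel S := by
  intro q hq
  simp only [Prod.fst_neg, Prod.snd_neg, inner_neg_left, hp q hq]

lemma sub_mem_adjRel {S : Set (H × H)} {p q : H × H} (hp : p ∈ adjRel S) (hq : q ∈ adjRel S) :
    p - q ∈ adjRel S := by
  intro r hr
  simp only [Prod.fst_sub, Prod.snd_sub, inner_sub_left, hp r hr, hq r hr]

lemma closure_subset_adjRel {S : Set (H × H)}
    (hsym : ∀ p ∈ S, ∀ q ∈ S, ⟪p.1, q.2⟫_ℂ = ⟪p.2, q.1⟫_ℂ) : closure S ⊆ adjRel S :=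
  closure_minimal hsym (isClosed_adjRel S)

lemma sqRel_adjRel_subset_adjRel_sqRel (S : Set (H × H)) :
    sqRel (adjRel S) ⊆ adjRel (sqRel S) := by
  rintro ⟨f, h⟩ ⟨g, hfg, hgh⟩ ⟨u, w⟩ ⟨m, hum, hmw⟩
  exact (hfg (m, w) hmw).trans (hgh (u, m) hum)

lemma swap_neg_mem_adjRel_iff {S : Set (H × H)} {f g : H} :
    (g, -f) ∈ adjRel S ↔ ∀ q ∈ S, ⟪f, q.1⟫_ℂ + ⟪g, q.2⟫_ℂ = 0 := by
  refine forall₂_congr fun q _ => ?_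
  rw [inner_neg_left, add_eq_zero_iff_eq_neg']

lemma re_inner_nonneg_of_mem_closure_sqRel {S : Set (H × H)}
    (hsym : ∀ p ∈ S, ∀ q ∈ S, ⟪p.1, q.2⟫_ℂ = ⟪p.2, q.1⟫_ℂ) {p : H × H}
    (hp : p ∈ closure (sqRel S)) : 0 ≤ (⟪p.1, p.2⟫_ℂ).re := by
  refine closure_minimal (s := sqRel S) ?_
    (isClosed_le continuous_const (Complex.continuous_re.comp
      (continuous_fst.inner continuous_snd))) hp
  rintro ⟨u, w⟩ ⟨m, hum, hmw⟩
  show 0 ≤ (⟪u, w⟫_ℂ).re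
  rw [hsym (u, m) hum (m, w) hmw]
  exact inner_self_nonneg (𝕜 := ℂ)

lemma eq_zero_of_mem_adjRel_of_swap_neg_mem_adjRel {S : Set (H × H)}
    (hsym : ∀ p ∈ S, ∀ q ∈ S, ⟪p.1, q.2⟫_ℂ = ⟪p.2, q.1⟫_ℂ)
    (hsq : adjRel (sqRel S) ⊆ closure (sqRel S)) {f g : H}
    (hfg : (f, g) ∈ adjRel S) (hgf : (g, -f) ∈ adjRel S) : f = 0 := by
  have hsqadj : (f, -f) ∈ adjRel (sqRel S) := sqRel_adjRel_subset_adjRel_sqRel S ⟨g, hfg, hgf⟩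
  have hnonneg := re_inner_nonneg_of_mem_closure_sqRel hsym (hsq hsqadj)
  rw [inner_neg_right, Complex.neg_re, neg_nonneg] at hnonneg
  exact re_inner_self_nonpos (𝕜 := ℂ).mp hnonneg

end

lemma exists_mem_closure_add_swap_neg_mem_adjRel (S : Submodule ℂ (H × H)) (a : H × H) :
    ∃ t ∈ closure (S : Set (H × H)), ∃ f g : H,
      a = t + (f, g) ∧ (g, -f) ∈ adjRel (S : Set (H × H)) := by
  let e : WithLp 2 (H × H) ≃L[ℂ] H × H := WithLp.prodContinuousLinearEquiv 2 ℂ H H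
  let T := (S.comap (e : WithLp 2 (H × H) →ₗ[ℂ] H × H)).topologicalClosure
  have hT : (T : Set (WithLp 2 (H × H))) = e ⁻¹' closure S := by
    rw [Submodule.topologicalClosure_coe, e.preimage_closure]
    rfl
  obtain ⟨t, ht, d, hd, hsum⟩ := T.exists_add_mem_mem_orthogonal (e.symm a)
  refine ⟨e t, Set.mem_preimage.mp (hT ▸ ht), (e d).1, (e d).2, ?_, ?_⟩
  · rw [← map_add, ← hsum, e.apply_symm_apply]
  · rw [swap_neg_mem_adjRel_iff]
    intro q hq
    have hqT : e.symm q ∈ T := Submodule.le_topologicalClosure _ (by simpa using hq)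
    have h := (Submodule.mem_orthogonal' T d).mp hd _ hqT
    rw [WithLp.prod_inner_apply] at h
    simpa [e] using h

/-- If the square `S²` of a symmetric linear relation `S` in a Hilbert
space is essentially self-adjoint, then `S` itself is essentially self-adjoint. -/
theorem statement4 (S : Submodule ℂ (H × H))
    (hsym : ∀ p ∈ S, ∀ q ∈ S, ⟪p.1, q.2⟫_ℂ = ⟪p.2, q.1⟫_ℂ)
    (hsq : EssSelfAdjointRel (sqRel (S : Set (H × H)))) :
    EssSelfAdjointRel (S : Set (H × H)) := by
  refine (closure_subset_adjRel hsym).antisymm fun a ha => ?_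
  obtain ⟨t, ht, f, g, rfl, hgf⟩ := exists_mem_closure_add_swap_neg_mem_adjRel S a
  have hfg : (f, g) ∈ adjRel (S : Set (H × H)) := by
    simpa using sub_mem_adjRel ha (closure_subset_adjRel hsym ht)
  have hf : f = 0 := eq_zero_of_mem_adjRel_of_swap_neg_mem_adjRel hsym hsq.ge hfg hgf
  have hg : g = 0 := by
    subst hf
    exact eq_zero_of_mem_adjRel_of_swap_neg_mem_adjRel hsym hsq.ge hgf
      (by simpa using neg_mem_adjRel hfg)
  rwa [hf, hg, Prod.mk_zero_zero, add_zero]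

end
end

section
/- Under the hypotheses of the doubled-system theorem, the system S(J̃, B̃, ℋ̃) is definite: if f ∈ ℒ²_ℋ̃(ℝ) ∩ AC(ℝ,ℂ²ⁿ) satisfies J̃f' + B̃f = 0 and ∫_ℝ f* ℋ̃ f = 0, and if the subsystems S(J,B,ℋ) and S(J,B,A) are definite, then f = 0. -/
open MeasureTheory Set Matrix Filter
open scoped ComplexOrder ENNReal NNReal

noncomputable section

variable {n : ℕ}

/-- The system `(J, B, W)` on `ℝ` is *definite*: every absolutely continuous solution
`f` of `J f' + B f = λ W f` with `f* W f = 0` a.e. (equivalently `∫ f* W f = 0`)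
vanishes identically. -/
def Definite (J B W : ℝ → Matrix (Fin n) (Fin n) ℂ) : Prop :=
  ∀ (lam : ℂ) (f f' : ℝ → Fin n → ℂ), IsACDeriv f f' →
    (∀ᵐ x, J x *ᵥ f' x + B x *ᵥ f x = lam • (W x *ᵥ f x)) →
    (∀ᵐ x, star (f x) ⬝ᵥ (W x *ᵥ f x) = 0) → ∀ x, f x = 0

/-- The square root of a positive semidefinite matrix, as `Matrix.PosSemidef.sqrt` was
defined in Mathlib (Dec 2024); removed from Mathlib since. -/
def Matrix.PosSemidef.sqrt {m : Type*} [Fintype m] [DecidableEq m] {M : Matrix m m ℂ}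
    (hM : M.PosSemidef) : Matrix m m ℂ :=
  (hM.1.eigenvectorUnitary : Matrix m m ℂ) * diagonal ((↑) ∘ (√·) ∘ hM.1.eigenvalues) *
    (star (hM.1.eigenvectorUnitary : Matrix m m ℂ))

section Auxiliary

open Topology
open Interval

private lemma mulVec_norm_le' {ι : Type*} [Fintype ι] (M : Matrix ι ι ℂ) (v : ι → ℂ) :
    ‖M *ᵥ v‖ ≤ (∑ i, ∑ j, ‖M i j‖) * ‖v‖ := by
  classical
  have hC : 0 ≤ (∑ i, ∑ j, ‖M i j‖) * ‖v‖ := by positivity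
  rw [pi_norm_le_iff_of_nonneg hC]
  intro i
  calc ‖(M *ᵥ v) i‖ = ‖∑ j, M i j * v j‖ := by rw [Matrix.mulVec, dotProduct]
    _ ≤ ∑ j, ‖M i j * v j‖ := norm_sum_le _ _
    _ ≤ ∑ j, ‖M i j‖ * ‖v‖ := by
        refine Finset.sum_le_sum fun j _ => ?_
        rw [norm_mul]
        exact mul_le_mul_of_nonneg_left (norm_le_pi_norm v j) (norm_nonneg _)
    _ = (∑ j, ‖M i j‖) * ‖v‖ := by rw [Finset.sum_mul]
    _ ≤ (∑ i, ∑ j, ‖M i j‖) * ‖v‖ := by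
        refine mul_le_mul_of_nonneg_right ?_ (norm_nonneg _)
        exact Finset.single_le_sum (f := fun i => ∑ j, ‖M i j‖)
          (fun k _ => Finset.sum_nonneg fun j _ => norm_nonneg _) (Finset.mem_univ i)

private lemma ae_hasDerivAt_primitive_s12 {E : Type*} [NormedAddCommGroup E] [NormedSpace ℝ E]
    [CompleteSpace E] {g : ℝ → E} (hg : LocallyIntegrable g) (K : E) (a : ℝ) :
    ∀ᵐ x, HasDerivAt (fun u => K + ∫ t in a..u, g t) (g x) x := by
  have hInt : ∀ a b : ℝ, IntervalIntegrable g volume a b := fun a b =>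
    (hg.integrableOn_isCompact isCompact_uIcc).intervalIntegrable
  filter_upwards [(Besicovitch.vitaliFamily (volume : Measure ℝ)).ae_tendsto_average_norm_sub hg]
    with x hx
  have hx' : Tendsto (fun r : ℝ => ⨍ y in Metric.closedBall x r, ‖g y - g x‖) (𝓝[>] 0) (𝓝 0) :=
    hx.comp (Besicovitch.tendsto_filterAt volume x)
  rw [hasDerivAt_iff_tendsto]
  set φ : ℝ → ℝ := fun x' =>
    ‖x' - x‖⁻¹ * ‖(K + ∫ t in a..x', g t) - (K + ∫ t in a..x, g t) - (x' - x) • g x‖ with hφ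
  have key : ∀ x' : ℝ, x' ≠ x →
      φ x' ≤ 2 * ⨍ y in Metric.closedBall x |x' - x|, ‖g y - g x‖ := by
    intro x' hne
    have hr : 0 < |x' - x| := abs_pos.mpr (sub_ne_zero.mpr hne)
    have h1 : (K + ∫ t in a..x', g t) - (K + ∫ t in a..x, g t) = ∫ t in x..x', g t := by
      rw [add_sub_add_left_eq_sub, ← intervalIntegral.integral_add_adjacent_intervals
        (hInt a x) (hInt x x'), add_sub_cancel_left]
    have h2 : (x' - x) • g x = ∫ _t in x..x', g x := by
      rw [intervalIntegral.integral_const]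
    have h3 : (∫ t in x..x', g t) - (∫ _t in x..x', g x) = ∫ t in x..x', (g t - g x) :=
      (intervalIntegral.integral_sub (hInt x x') intervalIntegrable_const).symm
    rw [hφ]
    simp only [h1, h2, h3]
    have h4 : ‖∫ t in x..x', (g t - g x)‖ ≤ ∫ t in Ι x x', ‖g t - g x‖ :=
      intervalIntegral.norm_integral_le_integral_norm_uIoc
    have hIsub : Ι x x' ⊆ Metric.closedBall x |x' - x| := by
      intro t ht
      rcases Set.mem_uIoc.mp ht with ⟨h5, h6⟩ | ⟨h5, h6⟩ <;>
        · rw [Metric.mem_closedBall, Real.dist_eq, abs_le]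
          constructor <;> cases abs_cases (x' - x) <;> linarith
    have hglob : IntegrableOn (fun t => ‖g t - g x‖) (Metric.closedBall x |x' - x|) := by
      exact ((hg.integrableOn_isCompact (isCompact_closedBall _ _)).sub
        (integrableOn_const measure_closedBall_lt_top.ne)).norm
    have h5 : (∫ t in Ι x x', ‖g t - g x‖) ≤ ∫ t in Metric.closedBall x |x' - x|, ‖g t - g x‖ := by
      refine setIntegral_mono_set hglob ?_ (HasSubset.Subset.eventuallyLE hIsub)
      exact Filter.Eventually.of_forall fun t => norm_nonneg _
    have h6 : (∫ t in Metric.closedBall x |x' - x|, ‖g t - g x‖)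
        = (2 * |x' - x|) * ⨍ y in Metric.closedBall x |x' - x|, ‖g y - g x‖ := by
      rw [setAverage_eq, Real.volume_real_closedBall (by linarith), smul_eq_mul,
        ← mul_assoc, mul_inv_cancel₀ (by linarith), one_mul]
    calc ‖x' - x‖⁻¹ * ‖∫ t in x..x', (g t - g x)‖
        ≤ ‖x' - x‖⁻¹ * ((2 * |x' - x|) * ⨍ y in Metric.closedBall x |x' - x|, ‖g y - g x‖) := by
          refine mul_le_mul_of_nonneg_left ?_ (by positivity)
          exact (h4.trans h5).trans_eq h6
      _ = 2 * ⨍ y in Metric.closedBall x |x' - x|, ‖g y - g x‖ := by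
          rw [Real.norm_eq_abs]; field_simp
  rw [show (𝓝 x) = 𝓝[≠] x ⊔ pure x from (nhdsNE_sup_pure x).symm,
    tendsto_sup]
  constructor
  · have habs : Tendsto (fun x' => |x' - x|) (𝓝[≠] x) (𝓝[>] 0) := by
      apply tendsto_nhdsWithin_of_tendsto_nhds_of_eventually_within
      · have : Tendsto (fun x' => |x' - x|) (𝓝 x) (𝓝 |x - x|) :=
          ((continuous_id.sub continuous_const).abs.tendsto x)
        simpa using this.mono_left nhdsWithin_le_nhds
      · filter_upwards [self_mem_nhdsWithin] with y hy
        exact abs_pos.mpr (sub_ne_zero.mpr hy)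
    have hB : Tendsto (fun x' => 2 * ⨍ y in Metric.closedBall x |x' - x|, ‖g y - g x‖)
        (𝓝[≠] x) (𝓝 0) := by
      have := (hx'.comp habs).const_mul (2:ℝ)
      simpa using this
    refine squeeze_zero' ?_ ?_ hB
    · exact Filter.Eventually.of_forall fun y => by positivity
    · filter_upwards [self_mem_nhdsWithin] with y hy using key y hy
  · refine Filter.tendsto_pure_left.mpr fun s hs => ?_
    have : φ x = 0 := by simp [hφ]
    rw [this] at *
    exact mem_of_mem_nhds hs

private lemma IsACDeriv.continuous' {E : Type*} [NormedAddCommGroup E] [NormedSpace ℝ E]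
    [CompleteSpace E] {f f' : ℝ → E} (h : IsACDeriv f f') : Continuous f := by
  have hInt : ∀ a b : ℝ, IntervalIntegrable f' volume a b := fun a b =>
    (h.1.integrableOn_isCompact isCompact_uIcc).intervalIntegrable
  have hrw : f = fun b => f 0 + ∫ t in (0:ℝ)..b, f' t := funext fun b => h.2 0 b
  rw [hrw]
  exact continuous_const.add (intervalIntegral.continuous_primitive hInt 0)

private lemma IsACDeriv.ae_hasDerivAt' {E : Type*} [NormedAddCommGroup E] [NormedSpace ℝ E]
    [CompleteSpace E] {f f' : ℝ → E} (h : IsACDeriv f f') :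
    ∀ᵐ x, HasDerivAt f (f' x) x := by
  have hrw : f = fun b => f 0 + ∫ t in (0:ℝ)..b, f' t := funext fun b => h.2 0 b
  rw [hrw]
  exact ae_hasDerivAt_primitive_s12 h.1 (f 0) 0

private lemma IsACDeriv.ae_deriv_zero_of_zero {E : Type*} [NormedAddCommGroup E]
    [NormedSpace ℝ E] [CompleteSpace E] {f f' : ℝ → E} (h : IsACDeriv f f') :
    ∀ᵐ x, f x = 0 → f' x = 0 := by
  set Z : Set ℝ := f ⁻¹' {0} with hZ
  have hZm : MeasurableSet Z := (isClosed_singleton.preimage h.continuous').measurableSet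
  filter_upwards [h.ae_hasDerivAt',
    Besicovitch.ae_tendsto_measure_inter_div_of_measurableSet volume hZm] with x hD hdens hx0
  have hxZ : x ∈ Z := by simp [hZ, hx0]
  have hacc : x ∈ closure (Z \ {x}) := by
    by_contra hc
    rw [Metric.mem_closure_iff] at hc
    push_neg at hc
    obtain ⟨ε, hε, hsep⟩ := hc
    have hev : ∀ᶠ r in 𝓝[>] (0:ℝ), (volume (Z ∩ Metric.closedBall x r) /
        volume (Metric.closedBall x r) : ℝ≥0∞) = 0 := by
      filter_upwards [Ioo_mem_nhdsGT_of_mem (Set.left_mem_Ico.mpr hε)] with r hr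
      have hsub : Z ∩ Metric.closedBall x r ⊆ {x} := by
        rintro y ⟨hy1, hy2⟩
        by_contra hyx
        refine absurd (hsep y ⟨hy1, hyx⟩) (not_le.mpr ?_)
        rw [dist_comm]
        exact lt_of_le_of_lt (Metric.mem_closedBall.mp hy2) hr.2
      have hz : volume (Z ∩ Metric.closedBall x r) = 0 :=
        le_antisymm ((measure_mono hsub).trans_eq (measure_singleton x)) (zero_le)
      rw [hz, ENNReal.zero_div]
    have T1 : Tendsto (fun r => volume (Z ∩ Metric.closedBall x r) /
        volume (Metric.closedBall x r)) (𝓝[>] (0:ℝ)) (𝓝 1) := by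
      simpa [Set.indicator_of_mem hxZ] using hdens
    have T0 : Tendsto (fun r => volume (Z ∩ Metric.closedBall x r) /
        volume (Metric.closedBall x r)) (𝓝[>] (0:ℝ)) (𝓝 0) :=
      Tendsto.congr' (hev.mono fun r hr => hr.symm) tendsto_const_nhds
    exact zero_ne_one (tendsto_nhds_unique T0 T1)
  have hNB : (𝓝[Z \ {x}] x).NeBot := mem_closure_iff_nhdsWithin_neBot.mp hacc
  have hslope : Tendsto (slope f x) (𝓝[Z \ {x}] x) (𝓝 (f' x)) := by
    have hDW := (hD.hasDerivWithinAt (s := Z))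
    rw [hasDerivWithinAt_iff_tendsto_slope] at hDW
    exact hDW
  have hslope0 : Tendsto (slope f x) (𝓝[Z \ {x}] x) (𝓝 0) := by
    refine Tendsto.congr' ?_ tendsto_const_nhds
    filter_upwards [self_mem_nhdsWithin] with y hy
    have hfy : f y = 0 := hy.1
    rw [slope_def_module, hfy, hx0, sub_zero, smul_zero]
  exact (tendsto_nhds_unique hslope0 hslope).symm

private lemma unique_continuation {E : Type*} [NormedAddCommGroup E] [NormedSpace ℝ E]
    [CompleteSpace E] {f f' : ℝ → E} (hf : IsACDeriv f f') {m : ℝ → ℝ}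
    (hm : LocallyIntegrable m) (hm0 : ∀ x, 0 ≤ m x)
    (hb : ∀ᵐ x, ‖f' x‖ ≤ m x * ‖f x‖) {x₀ : ℝ} (h0 : f x₀ = 0) : ∀ x, f x = 0 := by
  have hfc : Continuous f := hf.continuous'
  have hInt : ∀ a b : ℝ, IntervalIntegrable f' volume a b := fun a b =>
    (hf.1.integrableOn_isCompact isCompact_uIcc).intervalIntegrable
  have hmInt : ∀ a b : ℝ, IntervalIntegrable m volume a b := fun a b =>
    (hm.integrableOn_isCompact isCompact_uIcc).intervalIntegrable
  set Z : Set ℝ := f ⁻¹' {0} with hZdef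
  have hclosed : IsClosed Z := isClosed_singleton.preimage hfc
  have hopen : IsOpen Z := by
    rw [Metric.isOpen_iff]
    intro y hy
    have hfy : f y = 0 := hy
    set P : ℝ → ℝ := fun u => ∫ t in (y - 1)..u, m t with hP
    have hPc : Continuous P := intervalIntegral.continuous_primitive hmInt _
    have hψc : ContinuousAt (fun t : ℝ => P (y + t) - P (y - t)) 0 :=
      ((hPc.comp (continuous_const.add continuous_id)).sub
        (hPc.comp (continuous_const.sub continuous_id))).continuousAt
    obtain ⟨δ', hδ', hδsmall⟩ := Metric.continuousAt_iff.mp hψc (1/2) (by norm_num)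
    set δ : ℝ := δ' / 2 with hδdef
    have hδpos : 0 < δ := by positivity
    set I : Set ℝ := Icc (y - δ) (y + δ) with hI
    have hsubI : ∀ z ∈ I, Ι y z ⊆ I := by
      intro z hz
      refine subset_trans Ioc_subset_Icc_self ?_
      refine Set.OrdConnected.uIcc_subset Set.ordConnected_Icc ?_ hz
      exact ⟨by linarith, by linarith⟩
    have hmI : (∫ t in I, m t) ≤ 1 / 2 := by
      have h1 : dist δ (0:ℝ) < δ' := by
        rw [Real.dist_eq, sub_zero, abs_of_pos hδpos]
        rw [hδdef]; linarith
      have h2 := hδsmall h1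
      have hψ0 : P (y + 0) - P (y - 0) = 0 := by simp
      rw [Real.dist_eq, hψ0, sub_zero] at h2
      have h3 : (∫ t in I, m t) = P (y + δ) - P (y - δ) := by
        rw [hI, integral_Icc_eq_integral_Ioc,
          ← intervalIntegral.integral_of_le (by linarith : y - δ ≤ y + δ), hP]
        exact (intervalIntegral.integral_interval_sub_left (hmInt _ _) (hmInt _ _)).symm
      rw [h3]
      calc P (y + δ) - P (y - δ) ≤ |P (y + δ) - P (y - δ)| := le_abs_self _
        _ ≤ 1 / 2 := h2.le
    obtain ⟨z, hzI, hzmax⟩ := (isCompact_Icc (a := y - δ) (b := y + δ)).exists_isMaxOn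
      ⟨y, by constructor <;> linarith⟩ hfc.norm.continuousOn
    set S : ℝ := ‖f z‖ with hS
    have hS0 : 0 ≤ S := norm_nonneg _
    have hmfInt : IntegrableOn (fun t => m t * S) I :=
      (hm.integrableOn_isCompact isCompact_Icc).mul_const S
    have hest : S ≤ (1 / 2) * S := by
      have e1 : f z = ∫ t in y..z, f' t := by
        have e2 := hf.2 y z
        rw [hfy, zero_add] at e2
        exact e2
      calc S = ‖∫ t in y..z, f' t‖ := by rw [hS, e1]
        _ ≤ ∫ t in Ι y z, ‖f' t‖ := intervalIntegral.norm_integral_le_integral_norm_uIoc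
        _ ≤ ∫ t in Ι y z, m t * S := by
            refine integral_mono_ae
              (((hf.1.integrableOn_isCompact isCompact_uIcc).mono_set
                Set.uIoc_subset_uIcc).norm) (hmfInt.mono_set (hsubI z hzI)) ?_
            filter_upwards [ae_restrict_of_ae hb, ae_restrict_mem measurableSet_uIoc]
              with t htb htm
            exact htb.trans (mul_le_mul_of_nonneg_left (hzmax (hsubI z hzI htm)) (hm0 t))
        _ ≤ ∫ t in I, m t * S := by
            refine setIntegral_mono_set hmfInt ?_
              (HasSubset.Subset.eventuallyLE (hsubI z hzI))
            exact Filter.Eventually.of_forall fun t => mul_nonneg (hm0 t) hS0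
        _ = (∫ t in I, m t) * S := integral_mul_const S _
        _ ≤ (1 / 2) * S := mul_le_mul_of_nonneg_right hmI hS0
    have hSzero : S = 0 := by linarith
    refine ⟨δ, hδpos, fun w hw => ?_⟩
    have hwI : w ∈ I := by
      rw [Real.ball_eq_Ioo] at hw
      exact Ioo_subset_Icc_self hw
    have hw1 : ‖f w‖ ≤ S := hzmax hwI
    have : f w = 0 := norm_le_zero_iff.mp (by linarith)
    exact this
  have hZuniv : Z = univ := IsClopen.eq_univ ⟨hclosed, hopen⟩ ⟨x₀, h0⟩
  intro x
  have hx : x ∈ Z := hZuniv ▸ mem_univ x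
  simpa [hZdef] using hx

end Auxiliary

/-- Under the hypotheses of the doubled-system theorem, the doubled
system `S(J̃, B̃, ℋ̃)` is definite: if `f ∈ ℒ²_ℋ̃(ℝ) ∩ AC(ℝ,ℂ²ⁿ)` satisfies
`J̃ f' + B̃ f = 0` and `∫ f* ℋ̃ f = 0`, and the subsystems `S(J,B,ℋ)` and `S(J,B,A)`
are definite, then `f = 0`. -/
theorem statement12
    (J J' B H A V : ℝ → Matrix (Fin n) (Fin n) ℂ)
    (hJac : ∀ i j, IsACDeriv (fun x => J x i j) (fun x => J' x i j))
    (hJskew : ∀ x, (J x)ᴴ = -J x) (hJinv : ∀ x, IsUnit (J x))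
    (hBloc : ∀ i j, LocallyIntegrable (fun x => B x i j))
    (hBsym : ∀ x, B x = (B x)ᴴ - J' x)
    (hHloc : ∀ i j, LocallyIntegrable (fun x => H x i j))
    (hH : ∀ x, (H x).PosSemidef)
    (hAloc : ∀ i j, LocallyIntegrable (fun x => A x i j))
    (hA : ∀ x, (A x).PosSemidef)
    (hVloc : ∀ i j, LocallyIntegrable (fun x => V x i j))
    (hVherm : ∀ x, (V x).IsHermitian)
    -- q ≥ 1 absolutely continuous, V ≥ −qℋ
    (q q' : ℝ → ℝ) (hqac : IsACDeriv q q') (hq1 : ∀ x, 1 ≤ q x)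
    (hVq : ∀ x, (V x + Complex.ofReal (q x) • H x).PosSemidef)
    -- the coefficient c and the constant C
    (c : ℝ → ℝ≥0∞) (C : ℝ≥0)
    (hc : ∀ x, IsUnit (A x) → IsUnit (H x) → c x =
      (‖Matrix.toEuclideanCLM (𝕜 := ℂ)
        (((hA x).sqrt)⁻¹ * J x * ((hH x).sqrt)⁻¹)‖₊ : ℝ≥0∞))
    (hc' : ∀ x, ¬ (IsUnit (A x) ∧ IsUnit (H x)) → c x = ∞)
    -- |d/dx (q^{-1/2})| ≤ C / c
    (s s' : ℝ → ℝ) (hs : ∀ x, s x = (q x) ^ (-(1/2 : ℝ)))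
    (hsac : IsACDeriv s s')
    (hs' : ∀ x, (‖s' x‖₊ : ℝ≥0∞) ≤ (C : ℝ≥0∞) * (c x)⁻¹)
    (hdiv₁ : ∫⁻ x in Ioi (0:ℝ), (c x)⁻¹ = ∞)
    (hdiv₂ : ∫⁻ x in Iio (0:ℝ), (c x)⁻¹ = ∞)
    -- definiteness of the subsystems
    (hdefH : Definite J B H) (hdefA : Definite J B A)
    -- an absolutely continuous null solution of the doubled system
    (f f' : ℝ → (Fin n ⊕ Fin n) → ℂ)
    (hfac : IsACDeriv f f')
    (hfL2 : Integrable (fun x =>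
      (star (f x) ⬝ᵥ (fromBlocks (H x) 0 0 0 *ᵥ f x)).re))
    (heq : ∀ᵐ x,
      fromBlocks 0 (J x) (J x) 0 *ᵥ f' x +
        fromBlocks (V x) (B x) (B x) (-(A x)) *ᵥ f x = 0)
    (hnull : (∫ x, (star (f x) ⬝ᵥ (fromBlocks (H x) 0 0 0 *ᵥ f x)).re) = 0) :
    ∀ x, f x = 0 := by
  classical
  have hfInt : ∀ a b : ℝ, IntervalIntegrable f' volume a b := fun a b =>
    (hfac.1.integrableOn_isCompact isCompact_uIcc).intervalIntegrable
  -- the projection onto the first block of coordinates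
  set L : ((Fin n ⊕ Fin n) → ℂ) →L[ℝ] (Fin n → ℂ) :=
    ContinuousLinearMap.pi (fun i => ContinuousLinearMap.proj (Sum.inl i)) with hLdef
  have hACf₁ : IsACDeriv (fun y => f y ∘ Sum.inl) (fun y => f' y ∘ Sum.inl) := by
    constructor
    · rw [MeasureTheory.locallyIntegrable_iff]
      intro K hK
      exact L.integrable_comp (hfac.1.integrableOn_isCompact hK)
    · intro a b
      have h1 := congrArg L (hfac.2 a b)
      rw [map_add, ← ContinuousLinearMap.intervalIntegral_comp_comm L (hfInt a b)] at h1
      exact h1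
  -- continuity of J and its inverse
  have hJc : Continuous (fun x => J x) := by
    apply continuous_pi; intro i; apply continuous_pi; intro j
    exact (hJac i j).continuous'
  have hJinvc : Continuous (fun x => (J x)⁻¹) := by
    rw [continuous_iff_continuousAt]
    intro x
    have hdet : IsUnit (J x).det := (Matrix.isUnit_iff_isUnit_det _).mp (hJinv x)
    have h1 : ContinuousAt Ring.inverse ((J x).det) := by
      have h2 : (Ring.inverse : ℂ → ℂ) = fun z => z⁻¹ := funext fun z => Ring.inverse_eq_inv z
      rw [h2]
      exact continuousAt_inv₀ hdet.ne_zero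
    exact (continuousAt_matrix_inv (J x) h1).comp hJc.continuousAt
  -- block matrices
  set Jt : ℝ → Matrix (Fin n ⊕ Fin n) (Fin n ⊕ Fin n) ℂ :=
    fun x => fromBlocks 0 (J x) (J x) 0 with hJtdef
  set Bt : ℝ → Matrix (Fin n ⊕ Fin n) (Fin n ⊕ Fin n) ℂ :=
    fun x => fromBlocks (V x) (B x) (B x) (-(A x)) with hBtdef
  set Kt : ℝ → Matrix (Fin n ⊕ Fin n) (Fin n ⊕ Fin n) ℂ :=
    fun x => fromBlocks 0 (J x)⁻¹ (J x)⁻¹ 0 with hKtdef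
  have hKJ : ∀ x, Kt x * Jt x = 1 := by
    intro x
    have hdet : IsUnit (J x).det := (Matrix.isUnit_iff_isUnit_det _).mp (hJinv x)
    rw [hKtdef, hJtdef]
    simp only [Matrix.fromBlocks_multiply, Matrix.zero_mul, Matrix.mul_zero,
      add_zero, zero_add, Matrix.nonsing_inv_mul _ hdet]
    exact Matrix.fromBlocks_one
  -- the dominating coefficient
  set aco : ℝ → ℝ := fun x => ∑ i, ∑ j, ‖Kt x i j‖ with hacodef
  set bco : ℝ → ℝ := fun x => ∑ i, ∑ j, ‖Bt x i j‖ with hbcodef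
  have hacoc : Continuous aco := by
    refine continuous_finset_sum _ fun i _ => continuous_finset_sum _ fun j _ => ?_
    have hent : Continuous fun x => Kt x i j := by
      rw [hKtdef]
      cases i <;> cases j <;>
        simp only [Matrix.fromBlocks_apply₁₁, Matrix.fromBlocks_apply₁₂,
          Matrix.fromBlocks_apply₂₁, Matrix.fromBlocks_apply₂₂] <;>
        first
          | exact continuous_const
          | exact ((continuous_apply _).comp ((continuous_apply _).comp hJinvc))
    exact hent.norm
  have hbcoli : LocallyIntegrable bco := by
    refine locallyIntegrable_finset_sum _ fun i _ => locallyIntegrable_finset_sum _ fun j _ => ?_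
    have hent : LocallyIntegrable fun x => Bt x i j := by
      rw [hBtdef]
      cases i <;> cases j <;>
        simp only [Matrix.fromBlocks_apply₁₁, Matrix.fromBlocks_apply₁₂,
          Matrix.fromBlocks_apply₂₁, Matrix.fromBlocks_apply₂₂, Matrix.neg_apply]
      · exact hVloc _ _
      · exact hBloc _ _
      · exact hBloc _ _
      · exact (hAloc _ _).neg
    rw [MeasureTheory.locallyIntegrable_iff]
    intro K hK
    exact (hent.integrableOn_isCompact hK).norm
  set m : ℝ → ℝ := fun x => aco x * bco x with hmdef
  have hmli : LocallyIntegrable m := by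
    rw [MeasureTheory.locallyIntegrable_iff]
    intro K hK
    exact IntegrableOn.continuousOn_mul (hacoc.continuousOn)
      (hbcoli.integrableOn_isCompact hK) hK
  have haco0 : ∀ x, 0 ≤ aco x :=
    fun x => Finset.sum_nonneg fun i _ => Finset.sum_nonneg fun j _ => norm_nonneg _
  have hbco0 : ∀ x, 0 ≤ bco x :=
    fun x => Finset.sum_nonneg fun i _ => Finset.sum_nonneg fun j _ => norm_nonneg _
  have hm0 : ∀ x, 0 ≤ m x := fun x => mul_nonneg (haco0 x) (hbco0 x)
  -- the differential inequality
  have hbnd : ∀ᵐ x, ‖f' x‖ ≤ m x * ‖f x‖ := by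
    filter_upwards [heq] with x hx
    have h1 : Jt x *ᵥ f' x = -(Bt x *ᵥ f x) := eq_neg_of_add_eq_zero_left hx
    have h2 : f' x = -(Kt x *ᵥ (Bt x *ᵥ f x)) := by
      have h3 := congrArg (fun v => Kt x *ᵥ v) h1
      simpa [Matrix.mulVec_mulVec, hKJ x, Matrix.one_mulVec, Matrix.mulVec_neg] using h3
    calc ‖f' x‖ = ‖Kt x *ᵥ (Bt x *ᵥ f x)‖ := by rw [h2, norm_neg]
      _ ≤ aco x * ‖Bt x *ᵥ f x‖ := mulVec_norm_le' _ _
      _ ≤ aco x * (bco x * ‖f x‖) :=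
          mul_le_mul_of_nonneg_left (mulVec_norm_le' _ _) (haco0 x)
      _ = m x * ‖f x‖ := by rw [hmdef, mul_assoc]
  -- the null condition gives H f₁ = 0 a.e.
  have hps : ∀ x, star (f x) ⬝ᵥ (fromBlocks (H x) 0 0 0 *ᵥ f x)
      = star (f x ∘ Sum.inl) ⬝ᵥ (H x *ᵥ (f x ∘ Sum.inl)) := by
    intro x
    conv_lhs => rw [← Sum.elim_comp_inl_inr (f x)]
    rw [Matrix.fromBlocks_mulVec]
    have hstar : star (Sum.elim (f x ∘ Sum.inl) (f x ∘ Sum.inr))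
        = Sum.elim (star (f x ∘ Sum.inl)) (star (f x ∘ Sum.inr)) := by
      funext i; cases i <;> rfl
    rw [hstar, sumElim_dotProduct_sumElim]
    simp [Matrix.zero_mulVec, Matrix.mulVec_zero]
  have hr0 : ∀ᵐ x, (star (f x) ⬝ᵥ (fromBlocks (H x) 0 0 0 *ᵥ f x)).re = 0 := by
    have hnonneg : ∀ x, 0 ≤ (star (f x) ⬝ᵥ (fromBlocks (H x) 0 0 0 *ᵥ f x)).re := by
      intro x
      rw [hps x]
      exact (Complex.le_def.mp ((hH x).dotProduct_mulVec_nonneg (f x ∘ Sum.inl))).1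
    exact (integral_eq_zero_iff_of_nonneg_ae
      (Filter.Eventually.of_forall hnonneg) hfL2).mp hnull
  have haeH : ∀ᵐ x, H x *ᵥ (f x ∘ Sum.inl) = 0 := by
    filter_upwards [hr0] with x hx
    have hle := (hH x).dotProduct_mulVec_nonneg (f x ∘ Sum.inl)
    have him : (star (f x ∘ Sum.inl) ⬝ᵥ (H x *ᵥ (f x ∘ Sum.inl))).im = 0 :=
      ((Complex.le_def.mp hle).2).symm
    have hre : (star (f x ∘ Sum.inl) ⬝ᵥ (H x *ᵥ (f x ∘ Sum.inl))).re = 0 := by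
      rw [← hps x]; exact hx
    have hzero : star (f x ∘ Sum.inl) ⬝ᵥ (H x *ᵥ (f x ∘ Sum.inl)) = 0 := Complex.ext hre him
    exact ((hH x).dotProduct_mulVec_zero_iff (f x ∘ Sum.inl)).mp hzero
  -- the set of invertibility has positive measure in (0, ∞)
  set N : Set ℝ := {x | IsUnit (A x) ∧ IsUnit (H x)} with hNdef
  have hNpos : volume (Ioi (0:ℝ) ∩ N) ≠ 0 := by
    intro h0
    have h1 : ∀ᵐ x, x ∉ Ioi (0:ℝ) ∩ N := by
      rw [ae_iff]
      convert h0 using 2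
      ext x; simp
    have h2 : ∀ᵐ x ∂(volume.restrict (Ioi (0:ℝ))), (c x)⁻¹ = 0 := by
      filter_upwards [ae_restrict_of_ae h1, ae_restrict_mem measurableSet_Ioi] with x hx hxI
      have hxN : ¬ (IsUnit (A x) ∧ IsUnit (H x)) := fun hN => hx ⟨hxI, hN⟩
      rw [hc' x hxN]
      simp
    rw [lintegral_congr_ae h2] at hdiv₁
    simp at hdiv₁
  -- f₁ vanishes a.e. on N
  have hf₁N : ∀ᵐ x, x ∈ N → f x ∘ Sum.inl = 0 := by
    filter_upwards [haeH] with x hx hN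
    have hdet : IsUnit (H x).det := (Matrix.isUnit_iff_isUnit_det _).mp hN.2
    have h1 := congrArg (fun v => (H x)⁻¹ *ᵥ v) hx
    simpa [Matrix.mulVec_mulVec, Matrix.nonsing_inv_mul _ hdet, Matrix.one_mulVec] using h1
  -- the bottom block of the system
  have hbot : ∀ᵐ x, A x *ᵥ (f x ∘ Sum.inr)
      = J x *ᵥ (f' x ∘ Sum.inl) + B x *ᵥ (f x ∘ Sum.inl) := by
    filter_upwards [heq] with x hx
    rw [← Sum.elim_comp_inl_inr (f x), ← Sum.elim_comp_inl_inr (f' x)] at hx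
    rw [Matrix.fromBlocks_mulVec, Matrix.fromBlocks_mulVec] at hx
    funext i
    have hxi := congrFun hx (Sum.inr i)
    simp only [Sum.elim_inr, Pi.add_apply, Matrix.zero_mulVec, Matrix.neg_mulVec,
      Pi.neg_apply, Pi.zero_apply, add_zero, Sum.elim_comp_inl_inr] at hxi
    rw [Pi.add_apply]
    linear_combination -hxi
  -- f₂ vanishes a.e. on N
  have hf₂N : ∀ᵐ x, x ∈ N → f x ∘ Sum.inr = 0 := by
    filter_upwards [hbot, hf₁N, hACf₁.ae_deriv_zero_of_zero] with x hxbot hx1 hxz hN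
    have h1 : f x ∘ Sum.inl = 0 := hx1 hN
    have h2 : f' x ∘ Sum.inl = 0 := hxz h1
    have h3 : A x *ᵥ (f x ∘ Sum.inr) = 0 := by rw [hxbot, h1, h2]; simp
    have hdet : IsUnit (A x).det := (Matrix.isUnit_iff_isUnit_det _).mp hN.1
    have h4 := congrArg (fun v => (A x)⁻¹ *ᵥ v) h3
    simpa [Matrix.mulVec_mulVec, Matrix.nonsing_inv_mul _ hdet, Matrix.one_mulVec] using h4
  -- find a zero of f
  have hall : ∀ᵐ x, x ∈ N → f x = 0 := by
    filter_upwards [hf₁N, hf₂N] with x h1 h2 hN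
    funext i
    cases i with
    | inl i => exact congrFun (h1 hN) i
    | inr i => exact congrFun (h2 hN) i
  have hex : ∃ x₀, f x₀ = 0 := by
    by_contra hno
    push_neg at hno
    apply hNpos
    have hsub : (Ioi (0:ℝ) ∩ N) ⊆ {x | ¬ (x ∈ N → f x = 0)} := by
      intro x hx himp
      exact hno x (himp hx.2)
    exact measure_mono_null hsub (ae_iff.mp hall)
  obtain ⟨x₀, h0⟩ := hex
  exact unique_continuation hfac hmli hm0 hbnd h0

end
end
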